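/- arXiv:1403.4958 — 3 statements merged into one kernel-verified Lean document; each statement's English description precedes it below -/
import Mathlib

section
/- Every cyclic sound deterministic negotiation has a loop, i.e., there exist a marking x reachable from the initial marking and a nonempty occurrence sequence σ with x →σ x. -/
universe u v w x

/-- A negotiation over agents `A`, atom names `ν`, outcome names `ρ`, and
internal state spaces `Q a` for each agent `a`. -/
structure Negotiation (A : Type u) (ν : Type v) (ρ : Type w) (Q : A → Type x) where
  atoms : Finset ν
  init : ν
  final : ν
  parties : ν → Finset A
  outs : ν → Finset ρ
  trans : ν → A → ρ → Finset ν
  delta : ν → ρ → (∀ a, Q a) → (∀ a, Q a) → Prop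
  init_mem : init ∈ atoms
  final_mem : final ∈ atoms
  parties_nonempty : ∀ n ∈ atoms, (parties n).Nonempty
  outs_nonempty : ∀ n ∈ atoms, (outs n).Nonempty
  init_all : ∀ a, a ∈ parties init
  final_all : ∀ a, a ∈ parties final
  trans_sub : ∀ n ∈ atoms, ∀ a ∈ parties n, ∀ r ∈ outs n, trans n a r ⊆ atoms
  trans_empty_iff : ∀ n ∈ atoms, ∀ a ∈ parties n, ∀ r ∈ outs n, (trans n a r = ∅ ↔ n = final)
  delta_total : ∀ n ∈ atoms, ∀ r ∈ outs n, ∀ q, ∃ q', delta n r q q'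
  delta_frame : ∀ n ∈ atoms, ∀ r ∈ outs n, ∀ q q', delta n r q q' → ∀ a ∉ parties n, q' a = q a

namespace Negotiation

variable {A : Type u} {ν : Type v} {ρ : Type w} {Q : A → Type x}
variable [DecidableEq A]

/-- The initial marking. -/
def initM (N : Negotiation A ν ρ Q) : A → Finset ν := fun _ => {N.init}

/-- The final marking. -/
def finalM (_N : Negotiation A ν ρ Q) : A → Finset ν := fun _ => ∅

/-- A marking enables an atom if every party is ready to engage in it. -/
def Enables (N : Negotiation A ν ρ Q) (x : A → Finset ν) (n : ν) : Prop :=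
  n ∈ N.atoms ∧ ∀ a ∈ N.parties n, n ∈ x a

/-- The small step `x →(n,r) x'`. -/
def Step (N : Negotiation A ν ρ Q) (x : A → Finset ν) (n : ν) (r : ρ)
    (x' : A → Finset ν) : Prop :=
  N.Enables x n ∧ r ∈ N.outs n ∧
    ∀ a, x' a = if a ∈ N.parties n then N.trans n a r else x a

/-- Occurrence sequences: `Occ N x σ x'` means `x →σ x'`. -/
inductive Occ (N : Negotiation A ν ρ Q) : (A → Finset ν) → List (ν × ρ) → (A → Finset ν) → Prop
  | nil (x : A → Finset ν) : Occ N x [] x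
  | cons {x : A → Finset ν} {n : ν} {r : ρ} {x' : A → Finset ν} {l : List (ν × ρ)}
      {x'' : A → Finset ν} :
      N.Step x n r x' → Occ N x' l x'' → Occ N x ((n, r) :: l) x''

/-- A marking is reachable if some occurrence sequence leads to it from the initial marking. -/
def Reachable (N : Negotiation A ν ρ Q) (x : A → Finset ν) : Prop :=
  ∃ σ, Occ N N.initM σ x

/-- Soundness: every atom can become enabled, and every initial occurrence sequence can be
extended to a large step. -/
def Sound (N : Negotiation A ν ρ Q) : Prop :=
  (∀ n ∈ N.atoms, ∃ x, N.Reachable x ∧ N.Enables x n) ∧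
  (∀ σ x, Occ N N.initM σ x → ∃ τ, Occ N x τ N.finalM)

/-- The edge relation of the graph of a negotiation. -/
def Edge (N : Negotiation A ν ρ Q) (n n' : ν) : Prop :=
  n ∈ N.atoms ∧ ∃ a ∈ N.parties n, ∃ r ∈ N.outs n, n' ∈ N.trans n a r

/-- A negotiation is cyclic if its graph has a cycle. -/
def Cyclic (N : Negotiation A ν ρ Q) : Prop :=
  ∃ n, Relation.TransGen N.Edge n n

/-- A negotiation is acyclic if its graph has no cycle. -/
def Acyclic (N : Negotiation A ν ρ Q) : Prop := ¬ N.Cyclic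

/-- A negotiation is deterministic if every transition value is a singleton
(except at the final atom). -/
def Deterministic (N : Negotiation A ν ρ Q) : Prop :=
  ∀ n ∈ N.atoms, n ≠ N.final → ∀ a ∈ N.parties n, ∀ r ∈ N.outs n, ∃ m, N.trans n a r = {m}

/-- A loop: a nonempty occurrence sequence from a reachable marking back to itself. -/
def IsLoop (N : Negotiation A ν ρ Q) (σ : List (ν × ρ)) : Prop :=
  σ ≠ [] ∧ ∃ x, N.Reachable x ∧ Occ N x σ x

/-- The set of atoms occurring in an occurrence sequence. -/
def atomsOf [DecidableEq ν] (σ : List (ν × ρ)) : Finset ν := (σ.map Prod.fst).toFinset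

/-- A minimal loop: no loop has a set of atoms that is a proper subset of its set of atoms. -/
def IsMinimalLoop [DecidableEq ν] (N : Negotiation A ν ρ Q) (σ : List (ν × ρ)) : Prop :=
  N.IsLoop σ ∧ ∀ σ', N.IsLoop σ' → ¬ atomsOf σ' ⊂ atomsOf σ

/-- `s` is a synchronizer of the loop `σ`. -/
def Synchronizes [DecidableEq ν] (N : Negotiation A ν ρ Q) (s : ν) (σ : List (ν × ρ)) : Prop :=
  N.IsLoop σ ∧ s ∈ atomsOf σ ∧ ∀ p ∈ σ, N.parties p.1 ⊆ N.parties s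

/-- A loop is synchronized if it has a synchronizer. -/
def Synchronized [DecidableEq ν] (N : Negotiation A ν ρ Q) (σ : List (ν × ρ)) : Prop :=
  ∃ s, N.Synchronizes s σ

/-- The set of synchronizers of a negotiation. -/
def Synchronizers [DecidableEq ν] (N : Negotiation A ν ρ Q) : Set ν :=
  {s | ∃ σ, N.Synchronizes s σ}

/-- The outcome `(n,r)` unconditionally enables the atom `n'`. -/
def UncondEnables (N : Negotiation A ν ρ Q) (n : ν) (r : ρ) (n' : ν) : Prop :=
  N.parties n' ⊆ N.parties n ∧ ∀ a ∈ N.parties n', N.trans n a r = {n'}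

/-- The state transformer of an occurrence sequence: the relational composition of the
transformers of its outcomes. -/
def seqDelta (N : Negotiation A ν ρ Q) : List (ν × ρ) → ((∀ a, Q a) → (∀ a, Q a) → Prop)
  | [] => Eq
  | p :: l => Relation.Comp (N.delta p.1 p.2) (N.seqDelta l)

/-- The summary transformer `⟨N, r⟩` associated with a final outcome `r`. -/
def SummaryT (N : Negotiation A ν ρ Q) (r : ρ) : (∀ a, Q a) → (∀ a, Q a) → Prop :=
  fun q q' => ∃ σ, Occ N N.initM σ N.finalM ∧ σ.getLast? = some (N.final, r) ∧
    N.seqDelta σ q q'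

/-- Equivalence of negotiations over the same agents. -/
def Equivalent (N₁ N₂ : Negotiation A ν ρ Q) : Prop :=
  (¬ N₁.Sound ∧ ¬ N₂.Sound) ∨
  (N₁.Sound ∧ N₂.Sound ∧ N₁.outs N₁.final = N₂.outs N₂.final ∧
    ∀ r ∈ N₁.outs N₁.final, N₁.SummaryT r = N₂.SummaryT r)

/-- Total number of outcomes of all atoms, `|Out(N)|`. -/
def OutCard (N : Negotiation A ν ρ Q) : ℕ := ∑ n ∈ N.atoms, (N.outs n).card

/-- The target of an outcome `(n,r)`: the partial function assigning to each party its set of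
next atoms. -/
def target (N : Negotiation A ν ρ Q) (n : ν) (r : ρ) : A → Option (Finset ν) :=
  fun a => if a ∈ N.parties n then some (N.trans n a r) else none

/-- `Ta(N)`: the set of targets of all outcomes of `N`. -/
def Targets (N : Negotiation A ν ρ Q) : Set (A → Option (Finset ν)) :=
  {f | ∃ n ∈ N.atoms, ∃ r ∈ N.outs n, f = N.target n r}

section Rules

variable [DecidableEq ν] [DecidableEq ρ]

/-- The merge rule applied at atom `n`, merging outcomes `r₁, r₂` into the fresh outcome `rf`. -/
def MergeAt (n : ν) (r₁ r₂ rf : ρ) (N₁ N₂ : Negotiation A ν ρ Q) : Prop :=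
  n ∈ N₁.atoms ∧ r₁ ∈ N₁.outs n ∧ r₂ ∈ N₁.outs n ∧ r₁ ≠ r₂ ∧
  (∀ a ∈ N₁.parties n, N₁.trans n a r₁ = N₁.trans n a r₂) ∧
  rf ∉ N₁.outs n ∧
  N₂.atoms = N₁.atoms ∧ N₂.init = N₁.init ∧ N₂.final = N₁.final ∧
  N₂.parties = N₁.parties ∧
  N₂.outs n = insert rf (((N₁.outs n).erase r₁).erase r₂) ∧
  (∀ m, m ≠ n → N₂.outs m = N₁.outs m) ∧
  (∀ a, N₂.trans n a rf = N₁.trans n a r₁) ∧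
  (∀ r ∈ ((N₁.outs n).erase r₁).erase r₂, ∀ a, N₂.trans n a r = N₁.trans n a r) ∧
  (∀ m, m ≠ n → N₂.trans m = N₁.trans m) ∧
  (N₂.delta n rf = fun q q' => N₁.delta n r₁ q q' ∨ N₁.delta n r₂ q q') ∧
  (∀ r ∈ ((N₁.outs n).erase r₁).erase r₂, N₂.delta n r = N₁.delta n r) ∧
  (∀ m, m ≠ n → N₂.delta m = N₁.delta m)

/-- The condition "`n'` appears in no value of the transition function after steps (1)-(3)
of the shortcut rule applied to `(n, r)` and `n'`". -/
def ShortcutRemCond (N₁ : Negotiation A ν ρ Q) (n n' : ν) (r : ρ) : Prop :=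
  (∀ m ∈ N₁.atoms, ∀ a ∈ N₁.parties m, ∀ r'' ∈ N₁.outs m,
      (m = n → r'' ≠ r) → n' ∉ N₁.trans m a r'') ∧
  (∀ a ∈ N₁.parties n, a ∉ N₁.parties n' → n' ∉ N₁.trans n a r) ∧
  (∀ r' ∈ N₁.outs n', ∀ a ∈ N₁.parties n', n' ∉ N₁.trans n' a r')

/-- The shortcut rule applied at `(n,r)` shortcutting the unconditionally enabled atom `n'`,
with fresh outcome names given by `fr`. -/
def ShortcutAt (n n' : ν) (r : ρ) (fr : ρ → ρ) (N₁ N₂ : Negotiation A ν ρ Q) : Prop :=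
  N₁.Deterministic ∧
  n ∈ N₁.atoms ∧ n' ∈ N₁.atoms ∧ n ≠ n' ∧ r ∈ N₁.outs n ∧
  N₁.UncondEnables n r n' ∧
  (∀ r₁ ∈ N₁.outs n', ∀ r₂ ∈ N₁.outs n', fr r₁ = fr r₂ → r₁ = r₂) ∧
  (∀ r' ∈ N₁.outs n', fr r' ∉ N₁.outs n) ∧
  N₂.init = N₁.init ∧ N₂.final = N₁.final ∧
  N₂.outs n = ((N₁.outs n).erase r) ∪ (N₁.outs n').image fr ∧
  (∀ m ∈ N₂.atoms, m ≠ n → N₂.outs m = N₁.outs m) ∧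
  (∀ m ∈ N₂.atoms, N₂.parties m = N₁.parties m) ∧
  (∀ r' ∈ N₁.outs n', ∀ a ∈ N₁.parties n', N₂.trans n a (fr r') = N₁.trans n' a r') ∧
  (∀ r' ∈ N₁.outs n', ∀ a ∈ N₁.parties n, a ∉ N₁.parties n' →
      N₂.trans n a (fr r') = N₁.trans n a r) ∧
  (∀ r'' ∈ (N₁.outs n).erase r, ∀ a, N₂.trans n a r'' = N₁.trans n a r'') ∧
  (∀ m ∈ N₂.atoms, m ≠ n → N₂.trans m = N₁.trans m) ∧
  (∀ r' ∈ N₁.outs n', N₂.delta n (fr r') = Relation.Comp (N₁.delta n r) (N₁.delta n' r')) ∧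
  (∀ r'' ∈ (N₁.outs n).erase r, N₂.delta n r'' = N₁.delta n r'') ∧
  (∀ m ∈ N₂.atoms, m ≠ n → N₂.delta m = N₁.delta m) ∧
  (ShortcutRemCond N₁ n n' r → N₂.atoms = N₁.atoms.erase n') ∧
  (¬ ShortcutRemCond N₁ n n' r → N₂.atoms = N₁.atoms)

/-- The iteration rule applied at the self-loop outcome `(n, r)`, with fresh outcome names
given by `fr`. -/
def IterAt (n : ν) (r : ρ) (fr : ρ → ρ) (N₁ N₂ : Negotiation A ν ρ Q) : Prop :=
  n ∈ N₁.atoms ∧ r ∈ N₁.outs n ∧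
  (∀ a ∈ N₁.parties n, N₁.trans n a r = {n}) ∧
  (∀ r₁ ∈ (N₁.outs n).erase r, ∀ r₂ ∈ (N₁.outs n).erase r, fr r₁ = fr r₂ → r₁ = r₂) ∧
  N₂.atoms = N₁.atoms ∧ N₂.init = N₁.init ∧ N₂.final = N₁.final ∧
  N₂.parties = N₁.parties ∧
  N₂.outs n = ((N₁.outs n).erase r).image fr ∧
  (∀ m, m ≠ n → N₂.outs m = N₁.outs m) ∧
  (∀ r' ∈ (N₁.outs n).erase r, ∀ a, N₂.trans n a (fr r') = N₁.trans n a r') ∧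
  (∀ m, m ≠ n → N₂.trans m = N₁.trans m) ∧
  (∀ r' ∈ (N₁.outs n).erase r,
      N₂.delta n (fr r') =
        Relation.Comp (Relation.ReflTransGen (N₁.delta n r)) (N₁.delta n r')) ∧
  (∀ m, m ≠ n → N₂.delta m = N₁.delta m)

/-- The merge rule as a relation between negotiations. -/
def MergeRule (N₁ N₂ : Negotiation A ν ρ Q) : Prop :=
  ∃ n r₁ r₂ rf, MergeAt n r₁ r₂ rf N₁ N₂

/-- The shortcut rule as a relation between negotiations. -/
def ShortcutRule (N₁ N₂ : Negotiation A ν ρ Q) : Prop :=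
  ∃ n n' r fr, ShortcutAt n n' r fr N₁ N₂

/-- The iteration rule as a relation between negotiations. -/
def IterRule (N₁ N₂ : Negotiation A ν ρ Q) : Prop :=
  ∃ n r fr, IterAt n r fr N₁ N₂

/-- The guard of the merge rule is satisfied somewhere in `N₁`. -/
def MergeApplicable (N₁ : Negotiation A ν ρ Q) : Prop :=
  ∃ n ∈ N₁.atoms, ∃ r₁ ∈ N₁.outs n, ∃ r₂ ∈ N₁.outs n, r₁ ≠ r₂ ∧
    ∀ a ∈ N₁.parties n, N₁.trans n a r₁ = N₁.trans n a r₂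

end Rules

/-- A rule application, identified by its parameters. -/
inductive RuleTag (ν : Type v) (ρ : Type w) where
  | merge (n : ν) (r₁ r₂ rf : ρ)
  | shortcut (n n' : ν) (r : ρ) (fr : ρ → ρ)
  | iter (n : ν) (r : ρ) (fr : ρ → ρ)

/-- Whether a rule tag is a merge rule. -/
def RuleTag.isMerge : RuleTag ν ρ → Prop
  | .merge _ _ _ _ => True
  | _ => False

/-- Whether a rule tag is a merge or a shortcut rule. -/
def RuleTag.isMergeOrShortcut : RuleTag ν ρ → Prop
  | .iter _ _ _ => False
  | _ => True

section Chains

variable [DecidableEq ν] [DecidableEq ρ]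

/-- Applying the rule given by a tag. -/
def ApplyRule : RuleTag ν ρ → Negotiation A ν ρ Q → Negotiation A ν ρ Q → Prop
  | .merge n r₁ r₂ rf => MergeAt n r₁ r₂ rf
  | .shortcut n n' r fr => ShortcutAt n n' r fr
  | .iter n r fr => IterAt n r fr

/-- Applying a finite sequence of rules. -/
inductive Chain : List (RuleTag ν ρ) → Negotiation A ν ρ Q → Negotiation A ν ρ Q → Prop
  | nil (N : Negotiation A ν ρ Q) : Chain [] N N
  | cons {t : RuleTag ν ρ} {L : List (RuleTag ν ρ)} {N₁ N₂ N₃ : Negotiation A ν ρ Q} :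
      ApplyRule t N₁ N₂ → Chain L N₂ N₃ → Chain (t :: L) N₁ N₃

end Chains

section Fragments

variable [DecidableEq ν]

/-- The atoms of the fragment `F_s`: atoms occurring in loops synchronized by `s`. -/
def FragAtoms (N : Negotiation A ν ρ Q) (s : ν) : Set ν :=
  {n | ∃ σ, N.Synchronizes s σ ∧ n ∈ atomsOf σ}

/-- The outcomes of an atom `n` in the fragment `F_s`. -/
def FragOuts (N : Negotiation A ν ρ Q) (s : ν) (n : ν) : Set ρ :=
  {r | ∃ σ, N.Synchronizes s σ ∧ (n, r) ∈ σ}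

/-- An exit of the fragment `F_s`: an outcome of `N` whose atom belongs to `F_s`
but which is not an outcome of `F_s`. -/
def IsExit (N : Negotiation A ν ρ Q) (s : ν) (e : ν) (re : ρ) : Prop :=
  e ∈ N.FragAtoms s ∧ re ∈ N.outs e ∧ re ∉ N.FragOuts s e

/-- Characterization of the `s`-negotiation `N_s`: a negotiation over the agents `P_s`
whose atoms are those of the fragment `F_s` together with a fresh final atom, whose initial
atom is (the restriction of) `s`, and whose transition function agrees with the one of `F_s`
except that every value equal to `s` is replaced by the fresh final atom. -/
def IsSNeg (N : Negotiation A ν ρ Q) (s : ν)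
    (M : Negotiation {a : A // a ∈ N.parties s} ν ρ (fun a => Q a.1)) : Prop :=
  ∃ nf : ν, nf ∉ N.FragAtoms s ∧
    (↑M.atoms : Set ν) = insert nf (N.FragAtoms s) ∧
    M.init = s ∧ M.final = nf ∧
    (∀ n ∈ N.FragAtoms s, ∀ a : {a : A // a ∈ N.parties s},
        (a ∈ M.parties n ↔ a.1 ∈ N.parties n)) ∧
    (∀ n ∈ N.FragAtoms s, ∀ r : ρ, (r ∈ M.outs n ↔ r ∈ N.FragOuts s n)) ∧
    (∀ n ∈ N.FragAtoms s, ∀ r ∈ M.outs n, ∀ a : {a : A // a ∈ N.parties s},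
        (↑(M.trans n a r) : Set ν) = (fun t => if t = s then nf else t) '' ↑(N.trans n a.1 r)) ∧
    (∀ n ∈ N.FragAtoms s, ∀ r ∈ M.outs n, ∀ q q',
        M.delta n r q q' ↔
          ∃ qf qf' : (∀ a, Q a),
            (∀ a : {a : A // a ∈ N.parties s}, qf a.1 = q a) ∧
            (∀ a : {a : A // a ∈ N.parties s}, qf' a.1 = q' a) ∧
            N.delta n r qf qf')

end Fragments

section Procedure

variable [DecidableEq ν] [DecidableEq ρ]

/-- An execution of the reduction procedure on `N₀`:
`Ni 1` is obtained from `N₀` by exhaustive merging; while `Ni i` is cyclic, an atom `sel i`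
whose `s`-negotiation is acyclic is selected, the sequence of merge and shortcut rules that
summarizes this `s`-negotiation (except its last rule) is applied to `Ni i` (giving `Nmid i`),
the iteration rule is applied at `sel i` (giving `Ni' i`), and then the merge rule is applied
exhaustively (giving `Ni (i+1)`); finally, the resulting acyclic negotiation is summarized by
merge and shortcut rules. -/
structure RedExec (N₀ : Negotiation A ν ρ Q) where
  steps : ℕ
  Ni : ℕ → Negotiation A ν ρ Q
  Nmid : ℕ → Negotiation A ν ρ Q
  Ni' : ℕ → Negotiation A ν ρ Q
  sel : ℕ → ν
  initSeq : List (RuleTag ν ρ)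
  segSeq : ℕ → List (RuleTag ν ρ)
  mergeSeq : ℕ → List (RuleTag ν ρ)
  finalSeq : List (RuleTag ν ρ)
  Nfin : Negotiation A ν ρ Q
  h_init : Chain initSeq N₀ (Ni 1)
  h_init_merge : ∀ t ∈ initSeq, t.isMerge
  h_init_irred : ¬ (Ni 1).MergeApplicable
  h_cyc : ∀ i, 1 ≤ i → i ≤ steps → (Ni i).Cyclic
  h_acyc : ¬ (Ni (steps + 1)).Cyclic
  h_sel_mem : ∀ i, 1 ≤ i → i ≤ steps → sel i ∈ (Ni i).atoms
  h_sel_acyc : ∀ i, 1 ≤ i → i ≤ steps →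
    ∀ M : Negotiation {a : A // a ∈ (Ni i).parties (sel i)} ν ρ (fun a => Q a.1),
      (Ni i).IsSNeg (sel i) M → M.Acyclic
  h_seg : ∀ i, 1 ≤ i → i ≤ steps →
    ∃ (M M' : Negotiation {a : A // a ∈ (Ni i).parties (sel i)} ν ρ (fun a => Q a.1))
      (t : RuleTag ν ρ),
      (Ni i).IsSNeg (sel i) M ∧
      Chain (segSeq i ++ [t]) M M' ∧ M'.atoms.card = 1 ∧
      (∀ u ∈ segSeq i ++ [t], u.isMergeOrShortcut) ∧
      Chain (segSeq i) (Ni i) (Nmid i)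
  h_iter : ∀ i, 1 ≤ i → i ≤ steps → ∃ r fr, IterAt (sel i) r fr (Nmid i) (Ni' i)
  h_merge : ∀ i, 1 ≤ i → i ≤ steps →
    Chain (mergeSeq i) (Ni' i) (Ni (i + 1)) ∧ (∀ t ∈ mergeSeq i, t.isMerge) ∧
      ¬ (Ni (i + 1)).MergeApplicable
  h_final : Chain finalSeq (Ni (steps + 1)) Nfin ∧
    (∀ t ∈ finalSeq, t.isMergeOrShortcut) ∧ Nfin.atoms.card = 1
  h_stable : ∀ i, steps + 1 ≤ i → Ni i = Ni (steps + 1)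
  h_stable' : ∀ i, i < 1 ∨ steps < i → Ni' i = Ni i

/-- The total number of rule applications in an execution of the reduction procedure. -/
def RedExec.appl {N₀ : Negotiation A ν ρ Q} (E : RedExec N₀) : ℕ :=
  E.initSeq.length +
    (∑ i ∈ Finset.Icc 1 E.steps, ((E.segSeq i).length + 1 + (E.mergeSeq i).length)) +
    E.finalSeq.length

end Procedure

end Negotiation

open Negotiation

variable {A : Type} {ν : Type} {ρ : Type} {Q : A → Type}
variable [DecidableEq A] [DecidableEq ν] [DecidableEq ρ]

lemma Occ.append' {N : Negotiation A ν ρ Q} {x y z : A → Finset ν} {σ τ : List (ν × ρ)}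
    (h1 : Occ N x σ y) (h2 : Occ N y τ z) : Occ N x (σ ++ τ) z := by
  induction h1 with
  | nil => simpa
  | cons hs _ ih => exact Occ.cons hs (ih h2)

lemma occ_good {N : Negotiation A ν ρ Q} {x y : A → Finset ν} {σ : List (ν × ρ)}
    (h : Occ N x σ y) (hx : ∀ a, x a ⊆ insert N.init N.atoms) :
    ∀ a, y a ⊆ insert N.init N.atoms := by
  induction h with
  | nil => exact hx
  | @cons x n r x' l x'' hs _ ih =>
    apply ih
    intro a
    rw [hs.2.2 a]
    split
    · next ha =>
      exact fun m hm => Finset.mem_insert_of_mem (N.trans_sub n hs.1.1 a ha r hs.2.1 hm)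
    · exact hx a

lemma reachable_good {N : Negotiation A ν ρ Q} {x : A → Finset ν} (h : N.Reachable x) :
    ∀ a, x a ⊆ insert N.init N.atoms := by
  obtain ⟨σ, hσ⟩ := h
  exact occ_good hσ (fun a => by
    intro m hm
    simp only [initM, Finset.mem_singleton] at hm
    simp [hm])

lemma first_fire {N : Negotiation A ν ρ Q} {x z : A → Finset ν} {τ : List (ν × ρ)}
    {a : A} {n' : ν} (h : Occ N x τ z) (hx : x a = {n'}) (hz : z a = ∅) :
    ∃ π y, Occ N x π y ∧ N.Enables y n' := by
  induction h with
  | nil => exact absurd (hx ▸ hz) (Finset.singleton_ne_empty n')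
  | @cons x n r x' l x'' hs _ ih =>
    by_cases ha : a ∈ N.parties n
    · have hn : n ∈ x a := hs.1.2 a ha
      rw [hx, Finset.mem_singleton] at hn
      exact ⟨[], x, Occ.nil x, hn ▸ hs.1⟩
    · have : x' a = {n'} := by rw [hs.2.2 a, if_neg ha]; exact hx
      obtain ⟨π, y, hπ, hy⟩ := ih this hz
      exact ⟨(n, r) :: π, y, Occ.cons hs hπ, hy⟩

lemma reach_enabled_of_edge {N : Negotiation A ν ρ Q} (hS : N.Sound) (hD : N.Deterministic)
    {x : A → Finset ν} {n n' : ν} (hx : N.Reachable x) (hen : N.Enables x n)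
    (he : N.Edge n n') :
    ∃ σ x', σ ≠ [] ∧ Occ N x σ x' ∧ N.Reachable x' ∧ N.Enables x' n' := by
  obtain ⟨hnA, a, ha, r, hr, hn'⟩ := he
  have hne : N.trans n a r ≠ ∅ := fun h => by simp [h] at hn'
  have hnf : n ≠ N.final := fun h => hne ((N.trans_empty_iff n hnA a ha r hr).mpr h)
  obtain ⟨m, hm⟩ := hD n hnA hnf a ha r hr
  have htr : N.trans n a r = {n'} := by
    rw [hm] at hn' ⊢
    rw [Finset.mem_singleton] at hn'
    rw [hn']
  set x1 : A → Finset ν := fun b => if b ∈ N.parties n then N.trans n b r else x b with hx1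
  have hstep : N.Step x n r x1 := ⟨hen, hr, fun _ => rfl⟩
  have hx1a : x1 a = {n'} := by simp only [hx1, if_pos ha, htr]
  obtain ⟨σ0, hσ0⟩ := hx
  have hσ1 : Occ N N.initM (σ0 ++ [(n, r)]) x1 :=
    Occ.append' hσ0 (Occ.cons hstep (Occ.nil x1))
  obtain ⟨τ, hτ⟩ := hS.2 _ _ hσ1
  obtain ⟨π, y, hπ, hy⟩ := first_fire hτ hx1a rfl
  exact ⟨(n, r) :: π, y, by simp, Occ.cons hstep hπ,
    ⟨(σ0 ++ [(n, r)]) ++ π, Occ.append' hσ1 hπ⟩, hy⟩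

lemma reach_enabled_of_transGen {N : Negotiation A ν ρ Q} (hS : N.Sound)
    (hD : N.Deterministic) {n m : ν} (h : Relation.TransGen N.Edge n m) :
    ∀ x, N.Reachable x → N.Enables x n →
      ∃ σ x', σ ≠ [] ∧ Occ N x σ x' ∧ N.Reachable x' ∧ N.Enables x' m := by
  induction h with
  | single he => exact fun x hx hen => reach_enabled_of_edge hS hD hx hen he
  | tail _ he ih =>
    intro x hx hen
    obtain ⟨σ, x', hne, ho, hr', hen'⟩ := ih x hx hen
    obtain ⟨τ, x'', hne2, ho2, hr'', hen''⟩ := reach_enabled_of_edge hS hD hr' hen' he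
    exact ⟨σ ++ τ, x'', by simp [hne], Occ.append' ho ho2, hr'', hen''⟩

lemma transGen_exists_edge {N : Negotiation A ν ρ Q} {n m : ν}
    (h : Relation.TransGen N.Edge n m) : ∃ c, N.Edge n c := by
  induction h with
  | single he => exact ⟨_, he⟩
  | tail _ _ ih => exact ih

/-- Every cyclic sound deterministic negotiation has a loop. -/
theorem cyclic_sdn_has_loop (N : Negotiation A ν ρ Q)
    (hS : N.Sound) (hD : N.Deterministic) (hC : N.Cyclic) :
    ∃ σ : List (ν × ρ), N.IsLoop σ := by
  obtain ⟨n, hn⟩ := hC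
  obtain ⟨c, hec⟩ := transGen_exists_edge hn
  have hnA : n ∈ N.atoms := hec.1
  obtain ⟨x0, hx0r, hx0e⟩ := hS.1 n hnA
  -- the step function: go around the cycle once
  have step : ∀ x : A → Finset ν, N.Reachable x ∧ N.Enables x n →
      ∃ x', (N.Reachable x' ∧ N.Enables x' n) ∧ ∃ σ, σ ≠ [] ∧ Occ N x σ x' := by
    intro x hx
    obtain ⟨σ, x', hne, ho, hr', hen'⟩ :=
      reach_enabled_of_transGen hS hD hn x hx.1 hx.2
    exact ⟨x', ⟨hr', hen'⟩, σ, hne, ho⟩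
  set P : (A → Finset ν) → Prop := fun x => N.Reachable x ∧ N.Enables x n with hP
  let f : ℕ → {x : A → Finset ν // P x} := fun k =>
    Nat.rec ⟨x0, hx0r, hx0e⟩
      (fun _ p => ⟨(step p.1 p.2).choose, (step p.1 p.2).choose_spec.1⟩) k
  have hf : ∀ k, ∃ σ, σ ≠ [] ∧ Occ N (f k).1 σ (f (k + 1)).1 := fun k =>
    (step (f k).1 (f k).2).choose_spec.2
  -- A is finite
  have hAfin : Finite A := by
    have : (Set.univ : Set A).Finite :=
      Set.Finite.subset (N.parties N.init).finite_toSet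
        (fun a _ => by simpa using N.init_all a)
    exact Set.finite_univ_iff.mp this
  -- the subtype of markings satisfying P is finite
  have hfin : Finite {x : A → Finset ν // P x} := by
    let g : {x : A → Finset ν // P x} →
        (A → {s : Finset ν // s ∈ (insert N.init N.atoms).powerset}) :=
      fun x a => ⟨x.1 a, Finset.mem_powerset.mpr (reachable_good x.2.1 a)⟩
    have hg : Function.Injective g := by
      intro x y hxy
      apply Subtype.ext
      funext a
      have := congrFun hxy a
      exact congrArg Subtype.val this
    exact Finite.of_injective g hg
  obtain ⟨i, j, hij, hfij⟩ := Finite.exists_ne_map_eq_of_infinite f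
  -- chains of steps between indices
  have key : ∀ i j : ℕ, i < j → ∃ σ, σ ≠ [] ∧ Occ N (f i).1 σ (f j).1 := by
    intro i j hlt
    obtain ⟨d, rfl⟩ : ∃ d, j = i + d + 1 := ⟨j - i - 1, by omega⟩
    clear hlt
    induction d with
    | zero => simpa using hf i
    | succ d ih =>
      obtain ⟨σ, hσne, hσ⟩ := ih
      obtain ⟨τ, hτne, hτ⟩ := hf (i + d + 1)
      refine ⟨σ ++ τ, by simp [hσne], ?_⟩
      have : i + (d + 1) + 1 = (i + d + 1) + 1 := by omega
      rw [this]
      exact Occ.append' hσ hτ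
  have main : ∀ i j : ℕ, i < j → f i = f j → ∃ σ : List (ν × ρ), N.IsLoop σ := by
    intro i j hlt heq
    obtain ⟨σ, hσne, hσ⟩ := key i j hlt
    refine ⟨σ, hσne, (f i).1, (f i).2.1, ?_⟩
    have : (f j).1 = (f i).1 := congrArg Subtype.val heq.symm
    rwa [this] at hσ
  rcases hij.lt_or_gt with h | h
  · exact main i j h hfij
  · exact main j i h hfij.symm
end

section
/- For every minimal loop σ of a sound deterministic negotiation, the set of atoms occurring in σ induces a strongly connected subgraph of the graph of the negotiation. -/
universe u v w x

open Negotiation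

variable {A : Type} {ν : Type} {ρ : Type} {Q : A → Type}
variable [DecidableEq A] [DecidableEq ν] [DecidableEq ρ]

/-!
Let `σ` loop at the marking `x`, and let `R` be the set of atoms of `σ` reachable from a given
atom inside `σ`. Following the token of one agent around the loop shows that two atoms of `σ`
sharing a party are mutually reachable inside `σ`, so no agent takes part both in an atom of `R`
and in an atom of `σ` outside `R`. Hence the steps of `σ` at atoms of `R` can be played on their
own from `x`, and they bring the parties of `R` back to their state in `x`: they form a loop
whose atoms are exactly `R`. By minimality, `R` contains every atom of `σ`.
-/

namespace Negotiation

section Loops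

variable {A : Type*} {ν : Type*} {ρ : Type*} {Q : A → Type*} {N : Negotiation A ν ρ Q}

def EdgeIn (N : Negotiation A ν ρ Q) (S : Finset ν) (u v : ν) : Prop :=
  N.Edge u v ∧ u ∈ S ∧ v ∈ S

theorem EdgeIn.mono {S T : Finset ν} (hST : S ⊆ T) : N.EdgeIn S ≤ N.EdgeIn T :=
  fun _ _ h => ⟨h.1, hST h.2.1, hST h.2.2⟩

theorem mem_atomsOf [DecidableEq ν] {σ : List (ν × ρ)} {m : ν} :
    m ∈ atomsOf σ ↔ ∃ r, (m, r) ∈ σ := by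
  simp [atomsOf]

theorem mem_atomsOf_of_mem [DecidableEq ν] {σ : List (ν × ρ)} {p : ν × ρ} (hp : p ∈ σ) :
    p.1 ∈ atomsOf σ :=
  mem_atomsOf.2 ⟨p.2, hp⟩

theorem atomsOf_mono [DecidableEq ν] {σ τ : List (ν × ρ)} (h : σ ⊆ τ) :
    atomsOf σ ⊆ atomsOf τ := fun _ hm =>
  let ⟨r, hr⟩ := mem_atomsOf.1 hm
  mem_atomsOf.2 ⟨r, h hr⟩

theorem atomsOf_filter [DecidableEq ν] (σ : List (ν × ρ)) (R : Finset ν) :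
    atomsOf (σ.filter fun p => p.1 ∈ R) = atomsOf σ ∩ R := by
  ext m
  simp [mem_atomsOf]

variable [DecidableEq A]

theorem occ_append_iff {x z : A → Finset ν} {σ τ : List (ν × ρ)} :
    N.Occ x (σ ++ τ) z ↔ ∃ y, N.Occ x σ y ∧ N.Occ y τ z := by
  induction σ generalizing x with
  | nil => exact ⟨fun h => ⟨x, .nil x, h⟩, fun ⟨_, .nil _, h⟩ => h⟩
  | cons p σ ih =>
    constructor
    · rintro (_ | ⟨hs, h⟩)
      obtain ⟨y, h₁, h₂⟩ := ih.1 h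
      exact ⟨y, .cons hs h₁, h₂⟩
    · rintro ⟨y, _ | ⟨hs, h₁⟩, h₂⟩
      exact .cons hs (ih.2 ⟨y, h₁, h₂⟩)

theorem Occ.rotate {x : A → Finset ν} {σ τ : List (ν × ρ)} (h : N.Occ x (σ ++ τ) x) :
    ∃ y, N.Occ y (τ ++ σ) y := by
  obtain ⟨y, hσ, hτ⟩ := occ_append_iff.1 h
  exact ⟨y, occ_append_iff.2 ⟨x, hτ, hσ⟩⟩

theorem Step.reflTransGen_cons [DecidableEq ν] {y y' : A → Finset ν} {n : ν} {r : ρ}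
    {τ : List (ν × ρ)} {a : A} {v : ν} (hs : N.Step y n r y') (ha : a ∈ N.parties n)
    (hpath : ∃ w ∈ y' a, w ∈ atomsOf τ ∧
      Relation.ReflTransGen (N.EdgeIn (atomsOf τ)) w v) :
    Relation.ReflTransGen (N.EdgeIn (atomsOf ((n, r) :: τ))) n v := by
  obtain ⟨w, hw, hwτ, hwv⟩ := hpath
  have hsub : atomsOf τ ⊆ atomsOf ((n, r) :: τ) := atomsOf_mono (List.subset_cons_self _ _)
  rw [hs.2.2 a, if_pos ha] at hw
  refine Relation.ReflTransGen.head ⟨⟨hs.1.1, a, ha, r, hs.2.1, hw⟩, ?_, hsub hwτ⟩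
    (Relation.ReflTransGen.mono (EdgeIn.mono hsub) _ _ hwv)
  exact mem_atomsOf_of_mem List.mem_cons_self

theorem Occ.exists_reflTransGen_of_mem_parties [DecidableEq ν] {y z : A → Finset ν}
    {τ : List (ν × ρ)} (h : N.Occ y τ z) {q : ν × ρ} (hq : q ∈ τ) {a : A}
    (ha : a ∈ N.parties q.1) :
    ∃ m ∈ y a, m ∈ atomsOf τ ∧ Relation.ReflTransGen (N.EdgeIn (atomsOf τ)) m q.1 := by
  induction h with
  | nil => simp at hq
  | @cons y n r y' τ z hs h ih =>
    have hsub : atomsOf τ ⊆ atomsOf ((n, r) :: τ) := atomsOf_mono (List.subset_cons_self _ _)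
    by_cases han : a ∈ N.parties n
    · refine ⟨n, hs.1.2 a han, mem_atomsOf_of_mem List.mem_cons_self, ?_⟩
      rcases List.mem_cons.1 hq with rfl | hq
      · exact .refl
      · exact hs.reflTransGen_cons han (ih hq)
    · have hqτ : q ∈ τ := (List.mem_cons.1 hq).resolve_left (by rintro rfl; exact han ha)
      obtain ⟨m, hm, hmτ, hmq⟩ := ih hqτ
      rw [hs.2.2 a, if_neg han] at hm
      exact ⟨m, hm, hsub hmτ, Relation.ReflTransGen.mono (EdgeIn.mono hsub) _ _ hmq⟩

/-- Follow the token of the common party once around the cycle. -/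
theorem Occ.reflTransGen_of_mem_parties [DecidableEq ν] {x : A → Finset ν}
    {σ : List (ν × ρ)} (h : N.Occ x σ x) {p q : ν × ρ} (hp : p ∈ σ) (hq : q ∈ σ) {a : A}
    (hap : a ∈ N.parties p.1) (haq : a ∈ N.parties q.1) :
    Relation.ReflTransGen (N.EdgeIn (atomsOf σ)) p.1 q.1 := by
  obtain ⟨n, r⟩ := p
  obtain ⟨s, t, rfl⟩ := List.append_of_mem hp
  obtain ⟨y, _ | ⟨hs, hrot⟩⟩ := Occ.rotate h
  have hsub : atomsOf ((n, r) :: (t ++ s)) ⊆ atomsOf (s ++ (n, r) :: t) :=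
    atomsOf_mono fun _ => by simp only [List.mem_cons, List.mem_append]; tauto
  by_cases hqp : q = (n, r)
  · exact hqp ▸ .refl
  have hq' : q ∈ t ++ s := by
    simp only [List.mem_append, List.mem_cons, hqp, false_or] at hq ⊢
    tauto
  exact Relation.ReflTransGen.mono (EdgeIn.mono hsub) _ _
    (hs.reflTransGen_cons hap (hrot.exists_reflTransGen_of_mem_parties hq' haq))

/-- Steps at atoms outside `R` leave the agents of `B` untouched, and steps at atoms of `R`
involve only agents of `B`. -/
theorem Occ.filter_of_mem_iff [DecidableEq ν] {y z : A → Finset ν} {τ : List (ν × ρ)}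
    (h : N.Occ y τ z) (B : Finset A) (c : A → Finset ν) (R : Finset ν)
    (hB : ∀ p ∈ τ, ∀ a ∈ N.parties p.1, a ∈ B ↔ p.1 ∈ R) :
    N.Occ (B.piecewise y c) (τ.filter fun p => p.1 ∈ R) (B.piecewise z c) := by
  induction h with
  | nil => exact .nil _
  | @cons y n r y' τ z hs h ih =>
    have ih := ih fun p hp => hB p (List.mem_cons_of_mem _ hp)
    have hn := hB (n, r) List.mem_cons_self
    by_cases hnR : n ∈ R
    · rw [List.filter_cons_of_pos (by simpa using hnR)]
      refine .cons ⟨⟨hs.1.1, fun a ha => ?_⟩, hs.2.1, fun a => ?_⟩ ih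
      · rw [Finset.piecewise_eq_of_mem _ _ _ ((hn a ha).2 hnR)]
        exact hs.1.2 a ha
      · by_cases ha : a ∈ N.parties n
        · simp [Finset.piecewise_eq_of_mem _ _ _ ((hn a ha).2 hnR), hs.2.2 a, ha]
        · by_cases haB : a ∈ B <;> simp [Finset.piecewise, hs.2.2 a, ha, haB]
    · rw [List.filter_cons_of_neg (by simpa using hnR)]
      convert ih using 1
      funext a
      by_cases haB : a ∈ B
      · have ha : a ∉ N.parties n := fun ha => hnR ((hn a ha).1 haB)
        simp [Finset.piecewise, haB, hs.2.2 a, ha]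
      · simp [Finset.piecewise, haB]

theorem IsMinimalLoop.eq_atomsOf_of_closed [DecidableEq ν] {σ : List (ν × ρ)}
    (hmin : N.IsMinimalLoop σ) {R : Finset ν} (hRσ : R ⊆ atomsOf σ) (hne : R.Nonempty)
    (hR : ∀ u ∈ R, ∀ v ∈ atomsOf σ,
      Relation.ReflTransGen (N.EdgeIn (atomsOf σ)) u v → v ∈ R) :
    R = atomsOf σ := by
  obtain ⟨⟨-, x, hx, h⟩, hmin⟩ := hmin
  have hB : ∀ p ∈ σ, ∀ a ∈ N.parties p.1, a ∈ R.biUnion N.parties ↔ p.1 ∈ R := by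
    refine fun p hp a ha => ⟨fun haB => ?_, fun hpR => Finset.mem_biUnion.2 ⟨p.1, hpR, ha⟩⟩
    obtain ⟨u, huR, hau⟩ := Finset.mem_biUnion.1 haB
    obtain ⟨r, hu⟩ := mem_atomsOf.1 (hRσ huR)
    exact hR u huR p.1 (mem_atomsOf_of_mem hp) (h.reflTransGen_of_mem_parties hu hp hau ha)
  have hocc := h.filter_of_mem_iff _ x R hB
  rw [Finset.piecewise_same] at hocc
  have hatoms : atomsOf (σ.filter fun p => p.1 ∈ R) = R := by
    rw [atomsOf_filter, Finset.inter_eq_right.2 hRσ]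
  have hloop : N.IsLoop (σ.filter fun p => p.1 ∈ R) := by
    refine ⟨fun hnil => hne.ne_empty ?_, x, hx, hocc⟩
    rw [← hatoms, hnil]
    rfl
  exact LE.le.eq_of_not_ssubset hRσ (hatoms ▸ hmin _ hloop)

end Loops

end Negotiation

theorem minimal_loop_strongly_connected_general (N : Negotiation A ν ρ Q)
    (σ : List (ν × ρ)) (hmin : N.IsMinimalLoop σ) :
    ∀ n ∈ atomsOf σ, ∀ n' ∈ atomsOf σ,
      Relation.ReflTransGen
        (fun u v => N.Edge u v ∧ u ∈ atomsOf σ ∧ v ∈ atomsOf σ) n n' := by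
  classical
  intro n hn n' hn'
  let R := (atomsOf σ).filter (Relation.ReflTransGen (N.EdgeIn (atomsOf σ)) n)
  have hR : R = atomsOf σ :=
    hmin.eq_atomsOf_of_closed (Finset.filter_subset _ _) ⟨n, Finset.mem_filter.2 ⟨hn, .refl⟩⟩
      fun _ hu _ hv huv => Finset.mem_filter.2 ⟨hv, (Finset.mem_filter.1 hu).2.trans huv⟩
  exact (Finset.mem_filter.1 (hR ▸ hn')).2

/-- The set of atoms of a minimal loop of an SDN induces a strongly connected
subgraph of the graph of the negotiation. -/
theorem minimal_loop_strongly_connected (N : Negotiation A ν ρ Q)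
    (hS : N.Sound) (hD : N.Deterministic) (σ : List (ν × ρ)) (hmin : N.IsMinimalLoop σ) :
    ∀ n ∈ atomsOf σ, ∀ n' ∈ atomsOf σ,
      Relation.ReflTransGen
        (fun u v => N.Edge u v ∧ u ∈ atomsOf σ ∧ v ∈ atomsOf σ) n n' :=
  minimal_loop_strongly_connected_general N σ hmin
end

section
/- If a negotiation N is deterministic and the application of the shortcut, merge, or iteration rule to N yields a negotiation N', then N' is deterministic. -/
universe u v w x

open Negotiation

variable {A : Type} {ν : Type} {ρ : Type} {Q : A → Type}
variable [DecidableEq A] [DecidableEq ν] [DecidableEq ρ]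

/-- The shortcut, merge and iteration rules preserve determinism. -/
theorem rules_preserve_deterministic (N₁ N₂ : Negotiation A ν ρ Q)
    (hD : N₁.Deterministic)
    (h : ShortcutRule N₁ N₂ ∨ MergeRule N₁ N₂ ∨ IterRule N₁ N₂) :
    N₂.Deterministic := by
  rcases h with ⟨n, n', r, fr, hS⟩ | ⟨n, r₁, r₂, rf, hM⟩ | ⟨n, r, fr, hI⟩
  · -- shortcut
    obtain ⟨_, hn1, hn'1, hne, hr, hUE, hfrinj, hfrfresh, hinit, hfin, houts, houtsO,
      hparties, htr1, htr2, htr3, htrO, _, _, _, hrem1, hrem2⟩ := hS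
    intro m hm hmf a ha rr hrr
    have hsub : N₂.atoms ⊆ N₁.atoms := by
      by_cases hc : ShortcutRemCond N₁ n n' r
      · rw [hrem1 hc]; exact Finset.erase_subset _ _
      · rw [hrem2 hc]
    have hm1 : m ∈ N₁.atoms := hsub hm
    have hmf1 : m ≠ N₁.final := by rwa [hfin] at hmf
    have hpm : N₂.parties m = N₁.parties m := hparties m hm
    by_cases hmn : m = n
    · subst hmn
      rw [houts] at hrr
      rcases Finset.mem_union.mp hrr with h1 | h1
      · rw [htr3 rr h1 a]
        exact hD m hm1 hmf1 a (hpm ▸ ha) rr (Finset.mem_of_mem_erase h1)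
      · obtain ⟨r', hr', hfr⟩ := Finset.mem_image.mp h1
        subst hfr
        have ha1 : a ∈ N₁.parties m := hpm ▸ ha
        by_cases han' : a ∈ N₁.parties n'
        · rw [htr1 r' hr' a han']
          have hn'f : n' ≠ N₁.final := by
            intro hh
            have h0 : N₁.trans n' a r' = ∅ :=
              (N₁.trans_empty_iff n' hn'1 a han' r' hr').mpr hh
            have h2 : N₂.trans m a (fr r') = ∅ := by rw [htr1 r' hr' a han', h0]
            exact hmf ((N₂.trans_empty_iff m hm a ha (fr r') (by
              rw [houts]; exact Finset.mem_union_right _ (Finset.mem_image_of_mem fr hr'))).mp h2)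
          exact hD n' hn'1 hn'f a han' r' hr'
        · rw [htr2 r' hr' a ha1 han']
          exact hD m hm1 hmf1 a ha1 r hr
    · rw [htrO m hm hmn]
      rw [houtsO m hm hmn] at hrr
      exact hD m hm1 hmf1 a (hpm ▸ ha) rr hrr
  · -- merge
    obtain ⟨hn1, hr1, hr2, hne, htreq, hrf, hatoms, hinit, hfin, hparties, houts, houtsO,
      htrf, htre, htrO, _, _, _⟩ := hM
    intro m hm hmf a ha rr hrr
    have hm1 : m ∈ N₁.atoms := hatoms ▸ hm
    have hmf1 : m ≠ N₁.final := by rwa [hfin] at hmf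
    have ha1 : a ∈ N₁.parties m := by rwa [hparties] at ha
    by_cases hmn : m = n
    · subst hmn
      rw [houts] at hrr
      rcases Finset.mem_insert.mp hrr with h1 | h1
      · subst h1
        rw [htrf a]
        exact hD m hm1 hmf1 a ha1 r₁ hr1
      · rw [htre rr h1 a]
        exact hD m hm1 hmf1 a ha1 rr (Finset.mem_of_mem_erase (Finset.mem_of_mem_erase h1))
    · rw [htrO m hmn]
      rw [houtsO m hmn] at hrr
      exact hD m hm1 hmf1 a ha1 rr hrr
  · -- iteration
    obtain ⟨hn1, hr1, hloop, hfrinj, hatoms, hinit, hfin, hparties, houts, houtsO,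
      htrf, htrO, _, _⟩ := hI
    intro m hm hmf a ha rr hrr
    have hm1 : m ∈ N₁.atoms := hatoms ▸ hm
    have hmf1 : m ≠ N₁.final := by rwa [hfin] at hmf
    have ha1 : a ∈ N₁.parties m := by rwa [hparties] at ha
    by_cases hmn : m = n
    · subst hmn
      rw [houts] at hrr
      obtain ⟨r', hr', hfr⟩ := Finset.mem_image.mp hrr
      subst hfr
      rw [htrf r' hr' a]
      exact hD m hm1 hmf1 a ha1 r' (Finset.mem_of_mem_erase hr')
    · rw [htrO m hmn]
      rw [houtsO m hmn] at hrr
      exact hD m hm1 hmf1 a ha1 rr hrr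
end
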